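/- arXiv:2506.01324 — 4 statements merged into one kernel-verified Lean document; each statement's English description precedes it below -/
import Mathlib

section
/- For two probability mass functions p, q on a finite state space S, it holds that KL(p,q) ≥ (log(e/2) / max(p_max, q_max)) · Σ_{s∈S} (p(s) − q(s))², where p_max = max_s p(s) and q_max = max_s q(s), and KL(p,q) = Σ_s p(s) log(p(s)/q(s)). -/
/-!
Put `D(a, b) = a log(a/b) - a + b = b · klFun (a/b)`; since `∑ p = ∑ q`, `KL(p, q) = ∑ₛ D(p s, q s)`.
The termwise bound `(a - b)² ≤ 2 max(a, b) D(a, b)` reduces, with `t = a/b`, to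
`(t - 1)² ≤ 2 klFun t` on `[0, 1]` and `(t - 1)² ≤ 2 t klFun t` on `[1, ∞)`; both differences vanish at
`t = 1` and are monotone, with derivatives `2 (log t - (t - 1)) ≤ 0` and `4 klFun t ≥ 0`.
Summing gives `∑ (p - q)² ≤ 2 M · KL(p, q)` for any common upper bound `M`, and `1 - log 2 ≤ 1/2`.
-/

open Real Finset

noncomputable def KLdiv {S : Type*} [Fintype S] (p q : S → ℝ) : ℝ :=
  ∑ s, p s * Real.log (p s / q s)

open InformationTheory Set

lemma hasDerivAt_sub_one_sq (x : ℝ) : HasDerivAt (fun x ↦ (x - 1) ^ 2) (2 * (x - 1)) x := by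
  simpa using ((hasDerivAt_id' x).sub_const 1).fun_pow 2

lemma sq_sub_one_le_two_mul_klFun_of_le_one {t : ℝ} (ht0 : 0 ≤ t) (ht1 : t ≤ 1) :
    (t - 1) ^ 2 ≤ 2 * klFun t := by
  have hanti : AntitoneOn (fun x ↦ 2 * klFun x - (x - 1) ^ 2) (Icc 0 1) := by
    refine antitoneOn_of_hasDerivWithinAt_nonpos (convex_Icc 0 1)
      (f' := fun x ↦ 2 * log x - 2 * (x - 1)) (by fun_prop) (fun x hx ↦ ?_) (fun x hx ↦ ?_)
    all_goals rw [interior_Icc] at hx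
    · exact (((hasDerivAt_klFun hx.1.ne').const_mul 2).sub
        (hasDerivAt_sub_one_sq x)).hasDerivWithinAt
    · linarith [log_le_sub_one_of_pos hx.1]
  simpa [klFun_one] using hanti ⟨ht0, ht1⟩ ⟨zero_le_one, le_rfl⟩ ht1

lemma sq_sub_one_le_two_mul_mul_klFun_of_one_le {t : ℝ} (ht : 1 ≤ t) :
    (t - 1) ^ 2 ≤ 2 * t * klFun t := by
  have hmono : MonotoneOn (fun x ↦ 2 * x * klFun x - (x - 1) ^ 2) (Ici 1) := by
    refine monotoneOn_of_hasDerivWithinAt_nonneg (convex_Ici 1)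
      (f' := fun x ↦ 4 * klFun x) (by fun_prop) (fun x hx ↦ ?_) (fun x hx ↦ ?_)
    all_goals rw [interior_Ici] at hx
    · have hx0 : x ≠ 0 := (zero_lt_one.trans hx).ne'
      refine ((((hasDerivAt_id x).const_mul 2).mul (hasDerivAt_klFun hx0)).sub
        (hasDerivAt_sub_one_sq x)).hasDerivWithinAt.congr_deriv ?_
      simp only [klFun_apply, id]
      ring
    · exact mul_nonneg zero_le_four (klFun_nonneg (zero_le_one.trans hx.le))
  simpa [klFun_one] using hmono (mem_Ici.2 le_rfl) ht ht

lemma sq_sub_one_le_two_mul_max_mul_klFun {t : ℝ} (ht : 0 ≤ t) :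
    (t - 1) ^ 2 ≤ 2 * max 1 t * klFun t := by
  rcases le_total t 1 with h | h
  · simpa [max_eq_left h] using sq_sub_one_le_two_mul_klFun_of_le_one ht h
  · simpa [max_eq_right h] using sq_sub_one_le_two_mul_mul_klFun_of_one_le h

lemma mul_log_div_sub_add_eq_mul_klFun (a : ℝ) {b : ℝ} (hb : b ≠ 0) :
    a * log (a / b) - a + b = b * klFun (a / b) := by
  rw [klFun_apply]
  field_simp
  ring

lemma sq_sub_le_two_mul_max_mul {a b : ℝ} (ha : 0 ≤ a) (hb : 0 ≤ b) (hab : 0 < a → 0 < b) :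
    (a - b) ^ 2 ≤ 2 * max a b * (a * log (a / b) - a + b) := by
  rcases hb.eq_or_lt with rfl | hb
  · simp [le_antisymm (not_lt.mp (mt hab (lt_irrefl 0))) ha]
  have key := mul_le_mul_of_nonneg_left
    (sq_sub_one_le_two_mul_max_mul_klFun (div_nonneg ha hb.le)) (sq_nonneg b)
  have hmax : b * max 1 (a / b) = max b a := by
    rw [mul_max_of_nonneg _ _ hb.le, mul_one, mul_div_cancel₀ a hb.ne']
  calc (a - b) ^ 2 = b ^ 2 * (a / b - 1) ^ 2 := by field_simp
    _ ≤ b ^ 2 * (2 * max 1 (a / b) * klFun (a / b)) := key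
    _ = 2 * max a b * (b * klFun (a / b)) := by rw [max_comm a b, ← hmax]; ring
    _ = 2 * max a b * (a * log (a / b) - a + b) := by
      rw [mul_log_div_sub_add_eq_mul_klFun a hb.ne']

lemma mul_log_div_sub_add_nonneg {a b : ℝ} (ha : 0 ≤ a) (hb : 0 ≤ b) (hab : 0 < a → 0 < b) :
    0 ≤ a * log (a / b) - a + b := by
  rcases hb.eq_or_lt with rfl | hb
  · simp [le_antisymm (not_lt.mp (mt hab (lt_irrefl 0))) ha]
  rw [mul_log_div_sub_add_eq_mul_klFun a hb.ne']
  exact mul_nonneg hb.le (klFun_nonneg (div_nonneg ha hb.le))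

lemma sum_sq_sub_le_two_mul_mul_KLdiv {S : Type*} [Fintype S] {p q : S → ℝ} {M : ℝ}
    (hp0 : ∀ s, 0 ≤ p s) (hq0 : ∀ s, 0 ≤ q s) (hpq : ∀ s, 0 < p s → 0 < q s)
    (hsum : ∑ s, p s = ∑ s, q s) (hpM : ∀ s, p s ≤ M) (hqM : ∀ s, q s ≤ M) :
    ∑ s, (p s - q s) ^ 2 ≤ 2 * M * KLdiv p q := by
  have hKL : KLdiv p q = ∑ s, (p s * log (p s / q s) - p s + q s) := by
    rw [sum_add_distrib, sum_sub_distrib, hsum, sub_add_cancel, KLdiv]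
  rw [hKL, mul_sum]
  refine sum_le_sum fun s _ ↦ (sq_sub_le_two_mul_max_mul (hp0 s) (hq0 s) (hpq s)).trans ?_
  gcongr
  · exact mul_log_div_sub_add_nonneg (hp0 s) (hq0 s) (hpq s)
  · exact max_le (hpM s) (hqM s)

/-- lower bound on KL divergence via the squared `ℓ₂` distance:
`KL(p,q) ≥ (log(e/2) / max(p_max, q_max)) · Σ_s (p s − q s)²`,
where `log(e/2) = 1 − log 2`. -/
theorem kl_ge_l2 {S : Type*} [Fintype S] [Nonempty S] (p q : S → ℝ)
    (hp0 : ∀ s, 0 ≤ p s) (hq0 : ∀ s, 0 ≤ q s)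
    (hp1 : ∑ s, p s = 1) (hq1 : ∑ s, q s = 1)
    (hpq : ∀ s, 0 < p s → 0 < q s) :
    (1 - Real.log 2) /
        (max (Finset.univ.sup' Finset.univ_nonempty p)
             (Finset.univ.sup' Finset.univ_nonempty q)) *
      (∑ s, (p s - q s) ^ 2) ≤ KLdiv p q := by
  set M := max (univ.sup' univ_nonempty p) (univ.sup' univ_nonempty q)
  have hpM (s : S) : p s ≤ M := (le_sup' p (mem_univ s)).trans (le_max_left _ _)
  have hqM (s : S) : q s ≤ M := (le_sup' q (mem_univ s)).trans (le_max_right _ _)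
  have hM : 0 < M := by
    by_contra! hM
    have : ∑ s, p s ≤ 0 := sum_nonpos fun s _ ↦ (hpM s).trans hM
    linarith
  have hbound := sum_sq_sub_le_two_mul_mul_KLdiv hp0 hq0 hpq (hp1.trans hq1.symm) hpM hqM
  have hlog2 : 1 - log 2 ≤ 1 / 2 := by linarith [log_two_gt_d9]
  calc (1 - log 2) / M * ∑ s, (p s - q s) ^ 2
      ≤ 1 / 2 / M * ∑ s, (p s - q s) ^ 2 := by gcongr
    _ ≤ 1 / 2 / M * (2 * M * KLdiv p q) := by gcongr
    _ = KLdiv p q := by field_simp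
end

section
/- Let α_b ∈ (0,1], T, c positive integers with 2c ≤ α_b·T. Then the ratio C(α_b·T, 2c) / (Σ_{ℓ=0}^{c} C(2c, ℓ)·C(α_b·T − 2c, ℓ)) is at least 2·(α_b·T / (16·e·c))^c. -/
open Real Finset

lemma aux_pow_div_le_choose : ∀ (k n : ℕ), k ≤ n → ((n : ℝ) / k) ^ k ≤ n.choose k := by
  intro k
  induction k with
  | zero => intro n _; simp
  | succ k ih =>
    intro n hkn
    obtain ⟨m, rfl⟩ : ∃ m, n = m + 1 := ⟨n - 1, by omega⟩
    have hkm : k ≤ m := by omega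
    have hch : ((m + 1).choose (k + 1) : ℝ) * (k + 1) = (m + 1) * m.choose k := by
      exact_mod_cast congrArg (Nat.cast : ℕ → ℝ) (Nat.add_one_mul_choose_eq m k).symm
    have hkpos : (0:ℝ) < (k:ℝ) + 1 := by positivity
    have hbase : (((m:ℝ) + 1) / ((k:ℝ) + 1)) ^ k ≤ ((m : ℝ) / k) ^ k := by
      rcases Nat.eq_zero_or_pos k with hk0 | hk0
      · simp [hk0]
      · apply pow_le_pow_left₀ (by positivity)
        rw [div_le_div_iff₀ hkpos (by exact_mod_cast hk0)]
        have : (k:ℝ) ≤ m := by exact_mod_cast hkm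
        nlinarith
    have hmk : (0:ℝ) ≤ ((m:ℝ) + 1) / ((k:ℝ) + 1) := by positivity
    calc ((((m+1 : ℕ)) : ℝ) / ((k + 1 : ℕ) : ℝ)) ^ (k+1)
        = (((m:ℝ) + 1) / ((k:ℝ) + 1)) * ((((m:ℝ) + 1) / ((k:ℝ) + 1)) ^ k) := by
          push_cast; ring
      _ ≤ (((m:ℝ) + 1) / ((k:ℝ) + 1)) * (((m : ℝ) / k) ^ k) :=
          mul_le_mul_of_nonneg_left hbase hmk
      _ ≤ (((m:ℝ) + 1) / ((k:ℝ) + 1)) * (m.choose k : ℝ) :=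
          mul_le_mul_of_nonneg_left (ih m hkm) hmk
      _ = ((m + 1).choose (k + 1) : ℝ) := by
          rw [div_mul_eq_mul_div, div_eq_iff hkpos.ne']
          linarith [hch]

lemma aux_two_pow_le_fact : ∀ c : ℕ, 1 ≤ c → 2 * (c:ℝ) ^ c ≤ (c.factorial : ℝ) * Real.exp 1 ^ c := by
  intro c hc
  induction c, hc using Nat.le_induction with
  | base =>
    simpa using by nlinarith [Real.add_one_le_exp (1:ℝ)]
  | succ c hc ih =>
    have hcpos : (0:ℝ) < c := by exact_mod_cast hc
    have hone : (1:ℝ) + 1/c ≤ Real.exp (1/c) := by linarith [Real.add_one_le_exp (1/(c:ℝ))]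
    have h2 : ((1:ℝ) + 1/c) ^ c ≤ Real.exp 1 := by
      calc ((1:ℝ) + 1/c) ^ c ≤ Real.exp (1/c) ^ c := pow_le_pow_left₀ (by positivity) hone c
        _ = Real.exp ((1/c) * c) := by rw [← Real.exp_nat_mul]; ring_nf
        _ = Real.exp 1 := by rw [one_div, inv_mul_cancel₀ hcpos.ne']
    have hq : ((c:ℝ) + 1) ^ c = (c:ℝ) ^ c * ((1:ℝ) + 1/c) ^ c := by
      rw [← mul_pow]; congr 1; field_simp
    have hfact : ((c+1).factorial : ℝ) = ((c:ℝ) + 1) * c.factorial := by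
      push_cast [Nat.factorial_succ]; ring
    have hcc : (0:ℝ) ≤ (c:ℝ)^c := by positivity
    have hfpos : (0:ℝ) < (c.factorial : ℝ) := by exact_mod_cast c.factorial_pos
    have hepos : (0:ℝ) < Real.exp 1 ^ c := by positivity
    push_cast
    calc 2 * ((c:ℝ) + 1) ^ (c + 1) = ((c:ℝ) + 1) * (2 * ((c:ℝ)^c * ((1:ℝ) + 1/c) ^ c)) := by
          rw [pow_succ, hq]; ring
      _ ≤ ((c:ℝ) + 1) * ((c.factorial : ℝ) * Real.exp 1 ^ c * Real.exp 1) := by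
          apply mul_le_mul_of_nonneg_left _ (by positivity)
          calc 2 * ((c:ℝ)^c * ((1:ℝ) + 1/c) ^ c) = (2 * (c:ℝ)^c) * ((1:ℝ) + 1/c) ^ c := by ring
            _ ≤ ((c.factorial : ℝ) * Real.exp 1 ^ c) * Real.exp 1 := by
                apply mul_le_mul ih h2 (by positivity) (by positivity)
      _ = ((c + 1).factorial : ℝ) * Real.exp 1 ^ (c + 1) := by rw [hfact, pow_succ]; ring
    
lemma aux_choose_shift (d a l : ℕ) : a.choose l ≤ (a + d).choose (l + d) := by
  induction d with
  | zero => simp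
  | succ d ih =>
    calc a.choose l ≤ (a + d).choose (l + d) := ih
      _ ≤ (a + d + 1).choose (l + d + 1) := by
          rw [Nat.choose_succ_succ]; omega

/-- combinatorial hypothesis-counting bound.  With `n = α_b · T` an integer and
`2c ≤ n`, the ratio `C(n, 2c) / Σ_{ℓ=0}^{c} C(2c,ℓ)·C(n−2c,ℓ)` is at least
`2·(α_b·T/(16·e·c))^c`. -/
theorem hypothesis_counting_bound (alpha : ℝ) (T c n : ℕ)
    (halpha : 0 < alpha) (halpha1 : alpha ≤ 1) (hT : 0 < T) (hc : 0 < c)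
    (hn : (n : ℝ) = alpha * T) (hcn : 2 * c ≤ n) :
    2 * (alpha * T / (16 * Real.exp 1 * c)) ^ c ≤
      (n.choose (2 * c) : ℝ) /
        (∑ ℓ ∈ Finset.range (c + 1),
          ((2 * c).choose ℓ : ℝ) * ((n - 2 * c).choose ℓ : ℝ)) := by
  have hcpos : (0:ℝ) < c := by exact_mod_cast hc
  have hepos : (0:ℝ) < Real.exp 1 := Real.exp_pos 1
  set S : ℝ := ∑ ℓ ∈ Finset.range (c + 1),
      ((2 * c).choose ℓ : ℝ) * ((n - 2 * c).choose ℓ : ℝ) with hSdef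
  have hS1 : (1:ℝ) ≤ S := by
    have := Finset.single_le_sum
      (f := fun ℓ => ((2 * c).choose ℓ : ℝ) * ((n - 2 * c).choose ℓ : ℝ))
      (fun i _ => by positivity) (Finset.mem_range.2 (Nat.succ_pos c))
    simpa using this
  have hSpos : (0:ℝ) < S := lt_of_lt_of_le one_pos hS1
  -- bound each `C(n-2c, ℓ)` by `n^c / c!`
  have hnc : ∀ ℓ, ℓ ≤ c → ((n - 2*c).choose ℓ : ℝ) ≤ (n:ℝ)^c / (c.factorial : ℝ) := by
    intro ℓ hℓ
    have h1 : (n - 2*c).choose ℓ ≤ n.choose c := by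
      calc (n - 2*c).choose ℓ ≤ ((n - 2*c) + (c - ℓ)).choose (ℓ + (c - ℓ)) :=
            aux_choose_shift _ _ _
        _ = ((n - 2*c) + (c - ℓ)).choose c := by congr 1; omega
        _ ≤ n.choose c := Nat.choose_le_choose c (by omega)
    calc ((n - 2*c).choose ℓ : ℝ) ≤ (n.choose c : ℝ) := by exact_mod_cast h1
      _ ≤ (n:ℝ)^c / (c.factorial : ℝ) := by
          have := Nat.choose_le_pow_div (α := ℝ) c n
          push_cast at this ⊢; exact this
  have hnat : (∑ ℓ ∈ Finset.range (c+1), (2*c).choose ℓ) ≤ 4^c := by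
    calc ∑ ℓ ∈ Finset.range (c+1), (2*c).choose ℓ
        ≤ ∑ ℓ ∈ Finset.range (2*c+1), (2*c).choose ℓ :=
          Finset.sum_le_sum_of_subset (Finset.range_subset_range.2 (by omega))
      _ = 2 ^ (2*c) := Nat.sum_range_choose _
      _ = 4 ^ c := by rw [pow_mul]; norm_num
  have hSsum : S ≤ (4:ℝ)^c * ((n:ℝ)^c / (c.factorial : ℝ)) := by
    calc S ≤ ∑ ℓ ∈ Finset.range (c+1),
          ((2*c).choose ℓ : ℝ) * ((n:ℝ)^c / (c.factorial : ℝ)) := by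
          apply Finset.sum_le_sum
          intro ℓ hℓ
          exact mul_le_mul_of_nonneg_left
            (hnc ℓ (Nat.lt_succ_iff.1 (Finset.mem_range.1 hℓ))) (by positivity)
      _ = (∑ ℓ ∈ Finset.range (c+1), ((2*c).choose ℓ : ℝ)) * ((n:ℝ)^c / (c.factorial : ℝ)) := by
          rw [← Finset.sum_mul]
      _ ≤ (4:ℝ)^c * ((n:ℝ)^c / (c.factorial : ℝ)) := by
          apply mul_le_mul_of_nonneg_right _ (by positivity)
          exact_mod_cast hnat
  have hden : (2*(c:ℝ)^c / Real.exp 1 ^ c) ≤ (c.factorial : ℝ) := by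
    rw [div_le_iff₀ (by positivity)]
    exact aux_two_pow_le_fact c hc
  have h3 : (n:ℝ)^c / (c.factorial : ℝ) ≤ (n:ℝ)^c * Real.exp 1 ^ c / (2*(c:ℝ)^c) := by
    calc (n:ℝ)^c / (c.factorial : ℝ) ≤ (n:ℝ)^c / (2*(c:ℝ)^c / Real.exp 1 ^ c) := by
          gcongr
      _ = (n:ℝ)^c * Real.exp 1 ^ c / (2*(c:ℝ)^c) := by
          rw [div_div_eq_mul_div]
  rw [← hn, le_div_iff₀ hSpos]
  have hXnn : (0:ℝ) ≤ ((n:ℝ) / (16 * Real.exp 1 * c)) ^ c := by positivity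
  have hkey : 2 * ((n:ℝ) / (16 * Real.exp 1 * c)) ^ c *
      ((4:ℝ)^c * ((n:ℝ)^c * Real.exp 1 ^ c / (2*(c:ℝ)^c))) = ((n:ℝ) / (2*(c:ℝ))) ^ (2*c) := by
    have hb : (n:ℝ)/(16*Real.exp 1*(c:ℝ)) * (4*((n:ℝ)*Real.exp 1/(c:ℝ)))
        = ((n:ℝ)/(2*(c:ℝ)))^2 := by
      field_simp
      ring
    calc 2 * ((n:ℝ) / (16 * Real.exp 1 * c)) ^ c *
        ((4:ℝ)^c * ((n:ℝ)^c * Real.exp 1 ^ c / (2*(c:ℝ)^c)))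
        = ((n:ℝ) / (16 * Real.exp 1 * c)) ^ c * (4 * ((n:ℝ)*Real.exp 1/(c:ℝ)))^c := by
          rw [mul_pow, div_pow, mul_pow]
          ring
      _ = (((n:ℝ) / (16 * Real.exp 1 * c)) * (4 * ((n:ℝ)*Real.exp 1/(c:ℝ))))^c := by
          rw [← mul_pow]
      _ = (((n:ℝ)/(2*(c:ℝ)))^2)^c := by rw [hb]
      _ = ((n:ℝ) / (2*(c:ℝ))) ^ (2*c) := by rw [← pow_mul]
  calc 2 * ((n:ℝ) / (16 * Real.exp 1 * c)) ^ c * S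
      ≤ 2 * ((n:ℝ) / (16 * Real.exp 1 * c)) ^ c *
        ((4:ℝ)^c * ((n:ℝ)^c * Real.exp 1 ^ c / (2*(c:ℝ)^c))) := by
        apply mul_le_mul_of_nonneg_left _ (by positivity)
        calc S ≤ (4:ℝ)^c * ((n:ℝ)^c / (c.factorial : ℝ)) := hSsum
          _ ≤ (4:ℝ)^c * ((n:ℝ)^c * Real.exp 1 ^ c / (2*(c:ℝ)^c)) :=
            mul_le_mul_of_nonneg_left h3 (by positivity)
    _ = ((n:ℝ) / (2*(c:ℝ))) ^ (2*c) := hkey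
    _ ≤ (n.choose (2*c) : ℝ) := by
        have := aux_pow_div_le_choose (2*c) n hcn
        push_cast at this
        exact this
end

section
/- Let two ergodic Markov chains on finite state space S have stationary distributions π, π' and kernels p, p'. Then for all s ∈ S: ‖√(π(s))·p(·|s) − √(π'(s))·p'(·|s)‖₂² ≤ 2·π(s)·‖p(·|s) − p'(·|s)‖₂² + 2·(√(π(s)) − √(π'(s)))². Consequently, summing over s, the embedding separation Δ_W² satisfies Δ_W² ≤ (2·p_max/log(e/2))·D_π + 4·H²(π, π'), where D_π = Σ_s π(s)·KL(p(·|s), p'(·|s)), p_max is the maximal transition probability, and H² is the squared Hellinger distance. -/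
/-!
Writing `√π p − √π' p' = √π (p − p') + (√π − √π') p'`, the row bound is `(x + y)² ≤ 2x² + 2y²`
together with `‖p'(·|s)‖₂ ≤ 1`. For the sum, each row is compared with its KL divergence through
the pointwise bound `(a − b)² ≤ 2 max(a, b) (a log(a/b) + b − a)`, which comes from
`log x ≥ 2(x − 1)/(x + 1)` for `x ≥ 1` and `log x ≥ sinh (log x) = (x − x⁻¹)/2` for `x ≤ 1`.
This gives `‖p(·|s) − p'(·|s)‖₂² ≤ 2 p_max KL`, and `2 ≤ 1/(1 − log 2)` because `log 2 > 1/2`.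
-/

open Real Finset

lemma half_sub_inv_le_log {t : ℝ} (ht0 : 0 < t) (ht1 : t ≤ 1) : (t - t⁻¹) / 2 ≤ log t := by
  rw [← sinh_log ht0]
  exact sinh_le_self_iff.mpr (log_nonpos ht0.le ht1)

lemma sq_sub_le_two_mul_max_mul_log_div_add_sub {a b : ℝ} (ha : 0 ≤ a) (hb : 0 < b) :
    (a - b) ^ 2 ≤ 2 * max a b * (a * log (a / b) + b - a) := by
  rcases le_or_gt b a with hba | hab
  · have hlog : 2 * (a - b) / (a + b) ≤ log (a / b) := by
      have h := le_log_one_add_of_nonneg (x := a / b - 1)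
        (by rw [sub_nonneg, one_le_div hb]; exact hba)
      rw [add_sub_cancel] at h
      convert h using 1
      field_simp
      ring
    have hab : 0 < a + b := by linarith
    rw [max_eq_left hba]
    calc (a - b) ^ 2 ≤ 2 * a * ((a - b) ^ 2 / (a + b)) := by
          rw [← mul_div_assoc, le_div_iff₀ hab]
          nlinarith [sq_nonneg (a - b)]
      _ = 2 * a * (a * (2 * (a - b) / (a + b)) + b - a) := by field_simp; ring
      _ ≤ 2 * a * (a * log (a / b) + b - a) := by gcongr
  · rw [max_eq_right hab.le]
    rcases ha.eq_or_lt with rfl | ha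
    · rw [zero_mul]
      nlinarith
    have hlog := half_sub_inv_le_log (div_pos ha hb) ((div_le_one hb).mpr hab.le)
    calc (a - b) ^ 2 = 2 * b * (a * ((a / b - (a / b)⁻¹) / 2) + b - a) := by field_simp; ring
      _ ≤ 2 * b * (a * log (a / b) + b - a) := by gcongr

lemma four_mul_le_two_mul_div_one_sub_log_two {M : ℝ} (hM : 0 ≤ M) :
    4 * M ≤ 2 * M / (1 - log 2) := by
  have h := log_two_gt_d9
  rw [le_div_iff₀ (by linarith [log_two_lt_d9])]
  nlinarith

section

variable {S : Type*} [Fintype S]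

lemma le_one_of_sum_eq_one {v : S → ℝ} (hv : ∀ s, 0 ≤ v s) (hv1 : ∑ s, v s = 1) (s : S) :
    v s ≤ 1 :=
  hv1 ▸ single_le_sum (fun s _ => hv s) (mem_univ s)

lemma sum_sq_le_one_of_sum_eq_one {v : S → ℝ} (hv : ∀ s, 0 ≤ v s) (hv1 : ∑ s, v s = 1) :
    ∑ s, v s ^ 2 ≤ 1 := by
  simpa only [hv1, one_pow] using sum_sq_le_sq_sum_of_nonneg (s := univ) fun s _ => hv s

lemma sum_sq_mul_sub_mul_le (α β : ℝ) {u v : S → ℝ} (hv : ∑ s, v s ^ 2 ≤ 1) :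
    ∑ s, (α * u s - β * v s) ^ 2 ≤ 2 * α ^ 2 * ∑ s, (u s - v s) ^ 2 + 2 * (α - β) ^ 2 := by
  calc ∑ s, (α * u s - β * v s) ^ 2
      ≤ ∑ s, (2 * α ^ 2 * (u s - v s) ^ 2 + 2 * (α - β) ^ 2 * v s ^ 2) := by
        refine sum_le_sum fun s _ => ?_
        nlinarith [sq_nonneg (α * (u s - v s) - (α - β) * v s)]
    _ = 2 * α ^ 2 * ∑ s, (u s - v s) ^ 2 + 2 * (α - β) ^ 2 * ∑ s, v s ^ 2 := by
        rw [sum_add_distrib, ← mul_sum, ← mul_sum]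
    _ ≤ 2 * α ^ 2 * ∑ s, (u s - v s) ^ 2 + 2 * (α - β) ^ 2 := by
        have := mul_le_of_le_one_right (by positivity : 0 ≤ 2 * (α - β) ^ 2) hv
        linarith

lemma sum_sq_sub_le_two_mul_KLdiv {a b : S → ℝ} {M : ℝ} (ha : ∀ s, 0 ≤ a s)
    (hb : ∀ s, 0 < b s) (haM : ∀ s, a s ≤ M) (hbM : ∀ s, b s ≤ M) (ha1 : ∑ s, a s = 1)
    (hb1 : ∑ s, b s = 1) :
    ∑ s, (a s - b s) ^ 2 ≤ 2 * M * KLdiv a b := by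
  have hpoint : ∀ s, (a s - b s) ^ 2 ≤ 2 * M * (a s * log (a s / b s) + b s - a s) := by
    intro s
    have h := sq_sub_le_two_mul_max_mul_log_div_add_sub (ha s) (hb s)
    have hmax : 0 < max (a s) (b s) := lt_max_of_lt_right (hb s)
    have hterm : 0 ≤ a s * log (a s / b s) + b s - a s := by
      nlinarith [sq_nonneg (a s - b s)]
    exact h.trans (by gcongr; exact max_le (haM s) (hbM s))
  calc ∑ s, (a s - b s) ^ 2 ≤ ∑ s, 2 * M * (a s * log (a s / b s) + b s - a s) :=
        sum_le_sum fun s _ => hpoint s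
    _ = 2 * M * KLdiv a b := by
        rw [← mul_sum, sum_sub_distrib, sum_add_distrib, ha1, hb1, KLdiv]
        ring

lemma KLdiv_nonneg {a b : S → ℝ} (ha : ∀ s, 0 ≤ a s) (hb : ∀ s, 0 < b s)
    (ha1 : ∑ s, a s = 1) (hb1 : ∑ s, b s = 1) : 0 ≤ KLdiv a b := by
  have h := sum_sq_sub_le_two_mul_KLdiv ha hb (le_one_of_sum_eq_one ha ha1)
    (le_one_of_sum_eq_one (fun s => (hb s).le) hb1) ha1 hb1
  linarith [sum_nonneg fun s (_ : s ∈ univ) => sq_nonneg (a s - b s)]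

lemma sum_mul_sum_sq_sub_le_two_mul_sum_mul_KLdiv {w : S → ℝ} {p q : S → S → ℝ} {M : ℝ}
    (hw : ∀ s, 0 ≤ w s) (hp : ∀ s s', 0 ≤ p s s') (hq : ∀ s s', 0 < q s s')
    (hpM : ∀ s s', p s s' ≤ M) (hqM : ∀ s s', q s s' ≤ M) (hp1 : ∀ s, ∑ s', p s s' = 1)
    (hq1 : ∀ s, ∑ s', q s s' = 1) :
    ∑ s, w s * ∑ s', (p s s' - q s s') ^ 2 ≤ 2 * M * ∑ s, w s * KLdiv (p s) (q s) := by
  calc ∑ s, w s * ∑ s', (p s s' - q s s') ^ 2 ≤ ∑ s, w s * (2 * M * KLdiv (p s) (q s)) :=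
        sum_le_sum fun s _ => mul_le_mul_of_nonneg_left
          (sum_sq_sub_le_two_mul_KLdiv (hp s) (hq s) (hpM s) (hqM s) (hp1 s) (hq1 s)) (hw s)
    _ = 2 * M * ∑ s, w s * KLdiv (p s) (q s) := by
        rw [mul_sum]
        exact sum_congr rfl fun s _ => by ring

end

theorem embedding_separation_upper_bound_general {S : Type*} [Fintype S] [Nonempty S]
    (p p' : S → S → ℝ) (pi pi' : S → ℝ)
    (hp0 : ∀ s s', 0 ≤ p s s') (hp'0 : ∀ s s', 0 < p' s s')
    (hprow : ∀ s, ∑ s', p s s' = 1) (hp'row : ∀ s, ∑ s', p' s s' = 1)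
    (hπ0 : ∀ s, 0 < pi s) :
    (∀ s, ∑ s', (Real.sqrt (pi s) * p s s' - Real.sqrt (pi' s) * p' s s') ^ 2 ≤
        2 * pi s * ∑ s', (p s s' - p' s s') ^ 2 +
          2 * (Real.sqrt (pi s) - Real.sqrt (pi' s)) ^ 2) ∧
    (∑ s, ∑ s', (Real.sqrt (pi s) * p s s' - Real.sqrt (pi' s) * p' s s') ^ 2 ≤
      (2 * (max (Finset.univ.sup' Finset.univ_nonempty fun z : S × S => p z.1 z.2)
               (Finset.univ.sup' Finset.univ_nonempty fun z : S × S => p' z.1 z.2)) /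
          (1 - Real.log 2)) *
        (∑ s, pi s * KLdiv (p s) (p' s)) +
      4 * ((1 / 2) * ∑ s, (Real.sqrt (pi s) - Real.sqrt (pi' s)) ^ 2)) := by
  set M := max (univ.sup' univ_nonempty fun z : S × S => p z.1 z.2)
    (univ.sup' univ_nonempty fun z : S × S => p' z.1 z.2)
  have hrow : ∀ s, ∑ s', (√(pi s) * p s s' - √(pi' s) * p' s s') ^ 2 ≤
      2 * pi s * ∑ s', (p s s' - p' s s') ^ 2 + 2 * (√(pi s) - √(pi' s)) ^ 2 := fun s => by
    simpa only [sq_sqrt (hπ0 s).le] using sum_sq_mul_sub_mul_le (√(pi s)) (√(pi' s))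
      (sum_sq_le_one_of_sum_eq_one (fun s' => (hp'0 s s').le) (hp'row s))
  have hpM : ∀ s s', p s s' ≤ M := fun s s' =>
    le_max_of_le_left (le_sup' (fun z : S × S => p z.1 z.2) (mem_univ (s, s')))
  have hp'M : ∀ s s', p' s s' ≤ M := fun s s' =>
    le_max_of_le_right (le_sup' (fun z : S × S => p' z.1 z.2) (mem_univ (s, s')))
  have hM : 0 ≤ M := (hp'0 _ _).le.trans (hp'M (Classical.arbitrary S) (Classical.arbitrary S))
  have hD : 0 ≤ ∑ s, pi s * KLdiv (p s) (p' s) := sum_nonneg fun s _ =>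
    mul_nonneg (hπ0 s).le (KLdiv_nonneg (hp0 s) (hp'0 s) (hprow s) (hp'row s))
  refine ⟨hrow, ?_⟩
  calc ∑ s, ∑ s', (√(pi s) * p s s' - √(pi' s) * p' s s') ^ 2
      ≤ ∑ s, (2 * pi s * ∑ s', (p s s' - p' s s') ^ 2 + 2 * (√(pi s) - √(pi' s)) ^ 2) :=
        sum_le_sum fun s _ => hrow s
    _ = 2 * ∑ s, pi s * ∑ s', (p s s' - p' s s') ^ 2 + 2 * ∑ s, (√(pi s) - √(pi' s)) ^ 2 := by
        simp only [sum_add_distrib, mul_sum, mul_assoc]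
    _ ≤ 2 * (2 * M * ∑ s, pi s * KLdiv (p s) (p' s)) + 2 * ∑ s, (√(pi s) - √(pi' s)) ^ 2 := by
        gcongr
        exact sum_mul_sum_sq_sub_le_two_mul_sum_mul_KLdiv (fun s => (hπ0 s).le) hp0 hp'0 hpM hp'M
          hprow hp'row
    _ ≤ (2 * M / (1 - log 2)) * ∑ s, pi s * KLdiv (p s) (p' s) +
          4 * ((1 / 2) * ∑ s, (√(pi s) - √(pi' s)) ^ 2) := by
        have := mul_le_mul_of_nonneg_right (four_mul_le_two_mul_div_one_sub_log_two hM) hD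
        linarith

/-- for two ergodic chains `(p, pi)` and `(p', pi')` on a finite state
space, each row of the embedding difference satisfies
`‖√(pi s)·p(·|s) − √(pi' s)·p'(·|s)‖₂² ≤ 2·pi(s)·‖p(·|s) − p'(·|s)‖₂² + 2·(√(pi s) − √(pi' s))²`,
and consequently
`Δ_W² ≤ (2·p_max/log(e/2))·D_π + 4·H²(pi, pi')`,
where `D_π = Σ_s pi(s)·KL(p(·|s), p'(·|s))`, `p_max` is the maximal transition
probability, and `H²` is the squared Hellinger distance. -/
theorem embedding_separation_upper_bound {S : Type*} [Fintype S] [Nonempty S]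
    (p p' : S → S → ℝ) (pi pi' : S → ℝ)
    (hp0 : ∀ s s', 0 ≤ p s s') (hp'0 : ∀ s s', 0 < p' s s')
    (hprow : ∀ s, ∑ s', p s s' = 1) (hp'row : ∀ s, ∑ s', p' s s' = 1)
    (hπ0 : ∀ s, 0 < pi s) (hπ'0 : ∀ s, 0 < pi' s)
    (hπ1 : ∑ s, pi s = 1) (hπ'1 : ∑ s, pi' s = 1)
    (hstat : ∀ s', ∑ s, pi s * p s s' = pi s')
    (h'stat : ∀ s', ∑ s, pi' s * p' s s' = pi' s') :
    (∀ s, ∑ s', (Real.sqrt (pi s) * p s s' - Real.sqrt (pi' s) * p' s s') ^ 2 ≤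
        2 * pi s * ∑ s', (p s s' - p' s s') ^ 2 +
          2 * (Real.sqrt (pi s) - Real.sqrt (pi' s)) ^ 2) ∧
    (∑ s, ∑ s', (Real.sqrt (pi s) * p s s' - Real.sqrt (pi' s) * p' s s') ^ 2 ≤
      (2 * (max (Finset.univ.sup' Finset.univ_nonempty fun z : S × S => p z.1 z.2)
               (Finset.univ.sup' Finset.univ_nonempty fun z : S × S => p' z.1 z.2)) /
          (1 - Real.log 2)) *
        (∑ s, pi s * KLdiv (p s) (p' s)) +
      4 * ((1 / 2) * ∑ s, (Real.sqrt (pi s) - Real.sqrt (pi' s)) ^ 2)) :=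
  embedding_separation_upper_bound_general p p' pi pi' hp0 hp'0 hprow hp'row hπ0
end

section
/- Let two ergodic chains on finite S satisfy the η-regularity condition π(s)/π'(s) ≤ η_π and π'(s)/π(s) ≤ η_π for all s. Suppose there exist α, Δ > 0 and a state s₀ with π(s₀), π'(s₀) ≥ α and ‖p(·|s₀) − p'(·|s₀)‖₂ ≥ Δ. Then Σ_s ‖√(π(s))p(·|s) − √(π'(s))p'(·|s)‖₂² ≥ (1/2)·α·Δ² − max((√η_π − 1)², (1 − 1/√η_π)²). -/
set_option maxHeartbeats 1000000


open Real Finset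

/-- under `η`-regularity of the stationary distributions, a single-state
separation `(α, Δ)` at a state `s₀` yields the lower bound
`Σ_s ‖√(pi s)·p(·|s) − √(pi' s)·p'(·|s)‖₂² ≥ (1/2)·α·Δ² − max((√η − 1)², (1 − 1/√η)²)`. -/
theorem embedding_separation_lower_bound {S : Type*} [Fintype S]
    (p p' : S → S → ℝ) (pi pi' : S → ℝ) (η α Δ : ℝ) (s₀ : S)
    (hp0 : ∀ s s', 0 ≤ p s s') (hp'0 : ∀ s s', 0 ≤ p' s s')
    (hprow : ∀ s, ∑ s', p s s' = 1) (hp'row : ∀ s, ∑ s', p' s s' = 1)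
    (hπ0 : ∀ s, 0 < pi s) (hπ'0 : ∀ s, 0 < pi' s)
    (hπ1 : ∑ s, pi s = 1) (hπ'1 : ∑ s, pi' s = 1)
    (hη : 1 ≤ η)
    (hreg : ∀ s, pi s / pi' s ≤ η ∧ pi' s / pi s ≤ η)
    (hα : 0 < α) (hΔ : 0 < Δ)
    (hαs : α ≤ pi s₀ ∧ α ≤ pi' s₀)
    (hΔs : Δ ≤ Real.sqrt (∑ s', (p s₀ s' - p' s₀ s') ^ 2)) :
    (1 / 2) * α * Δ ^ 2 -
        max ((Real.sqrt η - 1) ^ 2) ((1 - 1 / Real.sqrt η) ^ 2) ≤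
      ∑ s, ∑ s', (Real.sqrt (pi s) * p s s' - Real.sqrt (pi' s) * p' s s') ^ 2 := by
  have x_def : True := trivial
  obtain ⟨hαx', hαy'⟩ := hαs
  set x := pi s₀ with hxdef
  set y := pi' s₀ with hydef
  have hx : 0 < x := hπ0 s₀
  have hy : 0 < y := hπ'0 s₀
  have hx1 : x ≤ 1 := by
    rw [← hπ1]
    exact Finset.single_le_sum (fun s _ => (hπ0 s).le) (Finset.mem_univ s₀)
  have hy1 : y ≤ 1 := by
    rw [← hπ'1]
    exact Finset.single_le_sum (fun s _ => (hπ'0 s).le) (Finset.mem_univ s₀)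
  have hsx : 0 ≤ Real.sqrt x := Real.sqrt_nonneg _
  have hsy : 0 ≤ Real.sqrt y := Real.sqrt_nonneg _
  have hsx2 : Real.sqrt x ^ 2 = x := Real.sq_sqrt hx.le
  have hsy2 : Real.sqrt y ^ 2 = y := Real.sq_sqrt hy.le
  have hsx1 : Real.sqrt x ≤ 1 := by
    rw [show (1:ℝ) = Real.sqrt 1 by simp]; exact Real.sqrt_le_sqrt hx1
  have hsy1 : Real.sqrt y ≤ 1 := by
    rw [show (1:ℝ) = Real.sqrt 1 by simp]; exact Real.sqrt_le_sqrt hy1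
  have hηs : 1 ≤ Real.sqrt η := by
    rw [show (1:ℝ) = Real.sqrt 1 by simp]; exact Real.sqrt_le_sqrt hη
  -- Step: (√x − √y)² ≤ (√η − 1)²
  have hxy : x ≤ η * y := by
    have := (hreg s₀).1
    rw [div_le_iff₀ hy] at this
    linarith [this]
  have hyx : y ≤ η * x := by
    have := (hreg s₀).2
    rw [div_le_iff₀ hx] at this
    linarith [this]
  have hsxy : Real.sqrt x ≤ Real.sqrt η * Real.sqrt y := by
    rw [← Real.sqrt_mul (by linarith : (0:ℝ) ≤ η)]
    exact Real.sqrt_le_sqrt hxy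
  have hsyx : Real.sqrt y ≤ Real.sqrt η * Real.sqrt x := by
    rw [← Real.sqrt_mul (by linarith : (0:ℝ) ≤ η)]
    exact Real.sqrt_le_sqrt hyx
  have hc : (Real.sqrt x - Real.sqrt y) ^ 2 ≤ (Real.sqrt η - 1) ^ 2 := by
    apply sq_le_sq'
    · nlinarith [hsyx, hsx1, hηs]
    · nlinarith [hsxy, hsy1, hηs]
  have hcM : (Real.sqrt x - Real.sqrt y) ^ 2 ≤
      max ((Real.sqrt η - 1) ^ 2) ((1 - 1 / Real.sqrt η) ^ 2) :=
    hc.trans (le_max_left _ _)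
  -- Pointwise inequality
  have key : ∀ s', (x / 2) * (p s₀ s' - p' s₀ s') ^ 2
      - (Real.sqrt x - Real.sqrt y) ^ 2 * (p' s₀ s') ^ 2
      ≤ (Real.sqrt x * p s₀ s' - Real.sqrt y * p' s₀ s') ^ 2 := by
    intro s'
    nlinarith [sq_nonneg (Real.sqrt x * (p s₀ s' - p' s₀ s')
      + 2 * ((Real.sqrt x - Real.sqrt y) * p' s₀ s')), hsx2]
  have hsum_key : (x / 2) * (∑ s', (p s₀ s' - p' s₀ s') ^ 2)
      - (Real.sqrt x - Real.sqrt y) ^ 2 * (∑ s', (p' s₀ s') ^ 2)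
      ≤ ∑ s', (Real.sqrt x * p s₀ s' - Real.sqrt y * p' s₀ s') ^ 2 := by
    have := Finset.sum_le_sum (fun s' (_ : s' ∈ (Finset.univ : Finset S)) => key s')
    simpa [Finset.sum_sub_distrib, Finset.mul_sum] using this
  -- Σ p'² ≤ 1
  have hQ : ∑ s', (p' s₀ s') ^ 2 ≤ 1 := by
    rw [← hp'row s₀]
    apply Finset.sum_le_sum
    intro s' _
    have h1 : p' s₀ s' ≤ 1 := by
      rw [← hp'row s₀]
      exact Finset.single_le_sum (fun t _ => hp'0 s₀ t) (Finset.mem_univ s')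
    nlinarith [hp'0 s₀ s']
  have hQ0 : 0 ≤ ∑ s', (p' s₀ s') ^ 2 :=
    Finset.sum_nonneg (fun s' _ => sq_nonneg _)
  -- Δ² ≤ D²
  have hD0 : 0 ≤ ∑ s', (p s₀ s' - p' s₀ s') ^ 2 :=
    Finset.sum_nonneg (fun s' _ => sq_nonneg _)
  have hΔ2 : Δ ^ 2 ≤ ∑ s', (p s₀ s' - p' s₀ s') ^ 2 := by
    calc Δ ^ 2 ≤ Real.sqrt (∑ s', (p s₀ s' - p' s₀ s') ^ 2) ^ 2 :=
          pow_le_pow_left₀ hΔ.le hΔs 2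
      _ = _ := Real.sq_sqrt hD0
  -- total sum ≥ term at s₀
  have hmain := Finset.single_le_sum
      (f := fun s => ∑ s', (Real.sqrt (pi s) * p s s' - Real.sqrt (pi' s) * p' s s') ^ 2)
      (fun s _ => Finset.sum_nonneg (fun s' _ => sq_nonneg _)) (Finset.mem_univ s₀)
  rw [← hxdef, ← hydef] at hmain
  have hc0 : 0 ≤ (Real.sqrt x - Real.sqrt y) ^ 2 := sq_nonneg _
  have hcQ : (Real.sqrt x - Real.sqrt y) ^ 2 * (∑ s', (p' s₀ s') ^ 2)
      ≤ max ((Real.sqrt η - 1) ^ 2) ((1 - 1 / Real.sqrt η) ^ 2) := by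
    calc (Real.sqrt x - Real.sqrt y) ^ 2 * (∑ s', (p' s₀ s') ^ 2)
        ≤ (Real.sqrt x - Real.sqrt y) ^ 2 * 1 := by
          exact mul_le_mul_of_nonneg_left hQ hc0
      _ = (Real.sqrt x - Real.sqrt y) ^ 2 := by ring
      _ ≤ _ := hcM
  have hαx : α ≤ x := hαx'
  have hxΔ : (1 / 2) * α * Δ ^ 2 ≤ (x / 2) * (∑ s', (p s₀ s' - p' s₀ s') ^ 2) := by
    have h1 : (1 / 2) * α * Δ ^ 2 ≤ (1 / 2) * x * Δ ^ 2 := by nlinarith [sq_nonneg Δ]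
    have h2 : (1 / 2) * x * Δ ^ 2 ≤ (x / 2) * (∑ s', (p s₀ s' - p' s₀ s') ^ 2) := by
      nlinarith [hΔ2, hx]
    linarith
  linarith [hsum_key, hmain, hcQ, hxΔ]
end
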